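/- Let ρ_AB = Σ_{e∈Fin n} p_e (ρ_e^A ⊗ E_e) be a density matrix on ℂ^m⊗ℂ^n and ρ_CD = Σ_{f∈Fin u} q_f (E_f ⊗ ρ_f^D) a density matrix on ℂ^u⊗ℂ^v, where each ρ_e^A, ρ_f^D is a density matrix, (p_e), (q_f) are probability vectors, and E_e = e_e e_e† (resp. E_f) denote the standard-basis rank-one projections on ℂ^n (resp. ℂ^u). If the products p_e q_f (e ∈ Fin n, f ∈ Fin u) are pairwise distinct, then N_H^b(ρ_AB⊗ρ_CD) = 0. -/

import Mathlib

open scoped Matrix Kronecker BigOperators ComplexOrder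
open Matrix

/-- The positive-semidefinite square root of a PSD matrix (0 if not PSD). -/
noncomputable def psdSqrt {N : Type*} [Fintype N] [DecidableEq N] (A : Matrix N N ℂ) :
    Matrix N N ℂ :=
  open scoped Classical in
  if h : A.PosSemidef then
    (h.1.eigenvectorUnitary : Matrix N N ℂ) *
      Matrix.diagonal ((↑) ∘ (Real.sqrt ∘ h.1.eigenvalues)) *
      (star h.1.eigenvectorUnitary : Matrix N N ℂ)
  else 0

/-- Squared Frobenius (Hilbert–Schmidt) norm: `‖X‖² = tr (Xᴴ X)`. -/
noncomputable def hsNormSq {N : Type*} [Fintype N] (X : Matrix N N ℂ) : ℝ :=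
  (Matrix.trace (Xᴴ * X)).re

/-- A density matrix: positive semidefinite with unit trace. -/
def IsDensity {N : Type*} [Fintype N] [DecidableEq N] (ρ : Matrix N N ℂ) : Prop :=
  ρ.PosSemidef ∧ ρ.trace = 1

/-- Standard inner product on `ℂ^N`. -/
noncomputable def cInner {N : Type*} [Fintype N] (x y : N → ℂ) : ℂ :=
  ∑ i, star (x i) * y i

/-- Outer product `ψ ψ†`. -/
noncomputable def outer {N : Type*} (ψ : N → ℂ) : Matrix N N ℂ :=
  Matrix.vecMulVec ψ (star ψ)

/-- The family of unit vectors of a rank-one von Neumann measurement: an orthonormal basis,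
indexed by the dimension. -/
def IsVNM {N : Type*} [Fintype N] [DecidableEq N] (u : N → N → ℂ) : Prop :=
  ∀ a b, cInner (u a) (u b) = if a = b then (1 : ℂ) else 0

/-- The rank-one projection `Π_h = u_h u_h†` of a measurement. -/
noncomputable def projOf {N : Type*} (u : N → N → ℂ) (h : N) : Matrix N N ℂ :=
  outer (u h)

/-- The measurement `{u_h u_h†}` fixes `σ`: `Σ_h Π_h σ Π_h = σ`. -/
def FixesVNM {N : Type*} [Fintype N] (u : N → N → ℂ) (σ : Matrix N N ℂ) : Prop :=
  ∑ h, projOf u h * σ * projOf u h = σ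

/-- Reduced state of the second factor: `(ρ_B)_{j j'} = Σ_i ρ_{(i,j),(i,j')}`. -/
noncomputable def redB {m n : ℕ} (ρ : Matrix (Fin m × Fin n) (Fin m × Fin n) ℂ) :
    Matrix (Fin n) (Fin n) ℂ :=
  Matrix.of fun j j' => ∑ i, ρ (i, j) (i, j')

/-- Reduced state of the first factor: `(ρ_C)_{k k'} = Σ_l ρ_{(k,l),(k',l)}`. -/
noncomputable def redC {u v : ℕ} (ρ : Matrix (Fin u × Fin v) (Fin u × Fin v) ℂ) :
    Matrix (Fin u) (Fin u) ℂ :=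
  Matrix.of fun k k' => ∑ l, ρ (k, l) (k', l)

/-- `I_m ⊗ P ⊗ I_v` acting on the middle two factors. -/
noncomputable def ampMid (m v : ℕ) {n u : ℕ} (P : Matrix (Fin n × Fin u) (Fin n × Fin u) ℂ) :
    Matrix ((Fin m × Fin n) × Fin u × Fin v) ((Fin m × Fin n) × Fin u × Fin v) ℂ :=
  Matrix.of fun p q =>
    (if p.1.1 = q.1.1 then (1 : ℂ) else 0) * P (p.1.2, p.2.1) (q.1.2, q.2.1) *
      (if p.2.2 = q.2.2 then (1 : ℂ) else 0)

/-- The map `Π^{BC}(X) = Σ_h (I_m ⊗ Π_h ⊗ I_v) X (I_m ⊗ Π_h ⊗ I_v)`. -/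
noncomputable def pinchBC {m n u v : ℕ} (w : (Fin n × Fin u) → (Fin n × Fin u) → ℂ)
    (X : Matrix ((Fin m × Fin n) × Fin u × Fin v) ((Fin m × Fin n) × Fin u × Fin v) ℂ) :
    Matrix ((Fin m × Fin n) × Fin u × Fin v) ((Fin m × Fin n) × Fin u × Fin v) ℂ :=
  ∑ h, ampMid m v (projOf w h) * X * ampMid m v (projOf w h)

/-- The measurement-induced nonbilocality `N_H^b(ρ_AB ⊗ ρ_CD)`. -/
noncomputable def NHb {m n u v : ℕ}
    (ρAB : Matrix (Fin m × Fin n) (Fin m × Fin n) ℂ)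
    (ρCD : Matrix (Fin u × Fin v) (Fin u × Fin v) ℂ) : ℝ :=
  sSup { r : ℝ | ∃ w : (Fin n × Fin u) → (Fin n × Fin u) → ℂ,
    IsVNM w ∧ FixesVNM w (redB ρAB ⊗ₖ redC ρCD) ∧
    r = hsNormSq (psdSqrt (ρAB ⊗ₖ ρCD) - pinchBC w (psdSqrt (ρAB ⊗ₖ ρCD))) }

/-! The reduced state `ρ_B ⊗ ρ_C` is the diagonal matrix with the pairwise distinct entries
`p_e q_f`, so each projection `Π_h` of a measurement fixing it commutes with it and is therefore
diagonal. The state `ρ_AB ⊗ ρ_CD` is block diagonal with respect to the `BC` index, hence commutes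
with every `I ⊗ Π_h ⊗ I`, and by the continuous functional calculus so does its square root.
Pinching by a complete family of idempotents that commute with `X` returns `X`, so every admissible
measurement leaves `√(ρ_AB ⊗ ρ_CD)` unchanged. -/

theorem sum_mul_mul_eq_self_of_commute {R ι : Type*} [Semiring R] [Fintype ι] {P : ι → R} {X : R}
    (hsum : ∑ i, P i = 1) (hidem : ∀ i, IsIdempotentElem (P i)) (hX : ∀ i, Commute (P i) X) :
    ∑ i, P i * X * P i = X :=
  calc ∑ i, P i * X * P i = ∑ i, P i * X := by
        refine Finset.sum_congr rfl fun i _ => ?_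
        rw [mul_assoc, ← (hX i).eq, ← mul_assoc, hidem i]
    _ = X := by rw [← Finset.sum_mul, hsum, one_mul]

theorem Matrix.IsDiag.of_commute_diagonal {N R : Type*} [Fintype N] [DecidableEq N] [CommRing R]
    [NoZeroDivisors R] {A : Matrix N N R} {d : N → R} (hd : Function.Injective d)
    (h : Commute A (diagonal d)) : A.IsDiag := by
  intro i j hij
  have hentry := congr_fun₂ h.eq i j
  rw [mul_diagonal, diagonal_mul] at hentry
  have hdij : d j - d i ≠ 0 := sub_ne_zero.mpr fun h => hij (hd h).symm
  exact (mul_eq_zero.mp (by linear_combination hentry : A i j * (d j - d i) = 0)).resolve_right hdij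

theorem Matrix.PosSemidef.psdSqrt_eq_cfc {N : Type*} [Fintype N] [DecidableEq N]
    {A : Matrix N N ℂ} (hA : A.PosSemidef) : psdSqrt A = cfc Real.sqrt A := by
  rw [hA.1.cfc_eq, IsHermitian.cfc, psdSqrt, dif_pos hA]
  rfl

theorem Commute.psdSqrt_left {N : Type*} [Fintype N] [DecidableEq N] {A B : Matrix N N ℂ}
    (h : Commute A B) : Commute (psdSqrt A) B := by
  by_cases hA : A.PosSemidef
  · rw [hA.psdSqrt_eq_cfc]
    exact h.cfc_real _
  · rw [psdSqrt, dif_neg hA]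
    exact Commute.zero_left B

namespace IsVNM

variable {N : Type*} [Fintype N] [DecidableEq N] {w : N → N → ℂ}

theorem projOf_mul_projOf (hw : IsVNM w) (a b : N) :
    projOf w a * projOf w b = if a = b then projOf w a else 0 := by
  have hdot : star (w a) ⬝ᵥ w b = if a = b then 1 else 0 := hw a b
  rw [projOf, projOf, outer, outer, vecMulVec_mul_vecMulVec, hdot]
  split_ifs with hab
  · rw [hab, one_smul]
  · rw [zero_smul, vecMulVec_zero]

theorem isIdempotentElem_projOf (hw : IsVNM w) (a : N) : IsIdempotentElem (projOf w a) := by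
  simpa [IsIdempotentElem] using hw.projOf_mul_projOf a a

theorem sum_projOf (hw : IsVNM w) : ∑ h, projOf w h = 1 := by
  -- `N` orthonormal vectors in `ℂ^N` are complete: `Vᴴ V = 1` forces `V Vᴴ = 1`.
  have hunitary : (of w)ᵀᴴ * (of w)ᵀ = 1 := by
    ext a b
    simpa [mul_apply, one_apply, cInner] using hw a b
  ext i j
  simpa [Matrix.sum_apply, projOf, outer, vecMulVec_apply, mul_apply] using
    congr_fun₂ (mul_eq_one_comm.mp hunitary : (of w)ᵀ * (of w)ᵀᴴ = 1) i j

theorem commute_projOf_of_fixesVNM (hw : IsVNM w) {σ : Matrix N N ℂ} (hfix : FixesVNM w σ)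
    (a : N) : Commute (projOf w a) σ := by
  have hleft : projOf w a * σ = projOf w a * σ * projOf w a := by
    conv_lhs => rw [← hfix]
    simp [Finset.mul_sum, ← mul_assoc, hw.projOf_mul_projOf]
  have hright : σ * projOf w a = projOf w a * σ * projOf w a := by
    conv_lhs => rw [← hfix]
    simp [Finset.sum_mul, mul_assoc, hw.projOf_mul_projOf]
  exact hleft.trans hright.symm

end IsVNM

section ampMid

variable {m n u v : ℕ}

theorem ampMid_mul (P Q : Matrix (Fin n × Fin u) (Fin n × Fin u) ℂ) :
    ampMid m v (P * Q) = ampMid m v P * ampMid m v Q := by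
  ext a b
  simp [ampMid, mul_apply, Fintype.sum_prod_type, ite_mul, mul_ite, Finset.mul_sum]

theorem ampMid_sum {ι : Type*} [Fintype ι] (P : ι → Matrix (Fin n × Fin u) (Fin n × Fin u) ℂ) :
    ampMid m v (∑ i, P i) = ∑ i, ampMid m v (P i) := by
  ext a b
  simp [ampMid, Matrix.sum_apply, Finset.mul_sum]

theorem ampMid_one : ampMid m v (1 : Matrix (Fin n × Fin u) (Fin n × Fin u) ℂ) = 1 := by
  ext a b
  simp only [ampMid, of_apply, one_apply, Prod.ext_iff]
  split_ifs <;> simp_all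

theorem ampMid_of_isDiag {P : Matrix (Fin n × Fin u) (Fin n × Fin u) ℂ} (hP : P.IsDiag) :
    ampMid m v P = diagonal fun a => P (a.1.2, a.2.1) (a.1.2, a.2.1) := by
  ext a b
  by_cases hab : a = b
  · simp [ampMid, hab]
  rw [diagonal_apply_ne _ hab, ampMid, of_apply]
  split_ifs with h₁ h₄
  · have hmid : (a.1.2, a.2.1) ≠ (b.1.2, b.2.1) := fun h =>
      hab (Prod.ext (Prod.ext h₁ (Prod.ext_iff.mp h).1) (Prod.ext (Prod.ext_iff.mp h).2 h₄))
    rw [hP hmid, mul_zero, zero_mul]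
  all_goals simp

end ampMid

theorem commute_ampMid_of_isDiag {m n u v : ℕ}
    {X : Matrix ((Fin m × Fin n) × Fin u × Fin v) ((Fin m × Fin n) × Fin u × Fin v) ℂ}
    (hX : ∀ a b, (a.1.2, a.2.1) ≠ (b.1.2, b.2.1) → X a b = 0)
    {P : Matrix (Fin n × Fin u) (Fin n × Fin u) ℂ} (hP : P.IsDiag) :
    Commute (ampMid m v P) X := by
  rw [commute_iff_eq, ampMid_of_isDiag hP]
  ext a b
  rw [diagonal_mul, mul_diagonal]
  by_cases hmid : (a.1.2, a.2.1) = (b.1.2, b.2.1)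
  · rw [hmid, mul_comm]
  · rw [hX a b hmid, mul_zero, zero_mul]

theorem pinchBC_eq_self_of_commute {m n u v : ℕ} {w : (Fin n × Fin u) → (Fin n × Fin u) → ℂ}
    (hw : IsVNM w)
    {X : Matrix ((Fin m × Fin n) × Fin u × Fin v) ((Fin m × Fin n) × Fin u × Fin v) ℂ}
    (hX : ∀ h, Commute (ampMid m v (projOf w h)) X) : pinchBC w X = X :=
  sum_mul_mul_eq_self_of_commute (by rw [← ampMid_sum, hw.sum_projOf, ampMid_one])
    (fun h => by rw [IsIdempotentElem, ← ampMid_mul, (hw.isIdempotentElem_projOf h).eq]) hX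

theorem single_diag_apply_of_ne {N α : Type*} [DecidableEq N] [Zero α] {j j' : N} (hj : j ≠ j')
    (e : N) (c : α) : single e e c j j' = 0 :=
  single_apply_of_ne _ _ _ _ _ fun h => hj (h.1.symm.trans h.2)

section ClassicalQuantum

variable {m n : ℕ} (c : Fin n → ℂ) (ρ : Fin n → Matrix (Fin m) (Fin m) ℂ)

theorem redB_sum_smul_kronecker_single :
    redB (∑ e, c e • (ρ e ⊗ₖ single e e (1 : ℂ))) = diagonal fun e => c e * (ρ e).trace := by
  ext j j'
  by_cases hj : j = j'
  · subst hj
    simp [redB, Matrix.sum_apply, single_apply, trace, Finset.mul_sum]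
  · simp [redB, Matrix.sum_apply, single_diag_apply_of_ne hj, hj]

theorem redC_sum_smul_single_kronecker :
    redC (∑ e, c e • (single e e (1 : ℂ) ⊗ₖ ρ e)) = diagonal fun e => c e * (ρ e).trace := by
  ext j j'
  by_cases hj : j = j'
  · subst hj
    simp [redC, Matrix.sum_apply, single_apply, trace, Finset.mul_sum]
  · simp [redC, Matrix.sum_apply, single_diag_apply_of_ne hj, hj]

theorem sum_smul_kronecker_single_apply_of_ne {j j' : Fin n} (hj : j ≠ j') (i i' : Fin m) :
    (∑ e, c e • (ρ e ⊗ₖ single e e (1 : ℂ))) (i, j) (i', j') = 0 := by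
  simp [Matrix.sum_apply, single_diag_apply_of_ne hj]

theorem sum_smul_single_kronecker_apply_of_ne {j j' : Fin n} (hj : j ≠ j') (i i' : Fin m) :
    (∑ e, c e • (single e e (1 : ℂ) ⊗ₖ ρ e)) (j, i) (j', i') = 0 := by
  simp [Matrix.sum_apply, single_diag_apply_of_ne hj]

end ClassicalQuantum

theorem kronecker_apply_eq_zero_of_mid_ne {m n u v : ℕ}
    {A : Matrix (Fin m × Fin n) (Fin m × Fin n) ℂ} {B : Matrix (Fin u × Fin v) (Fin u × Fin v) ℂ}
    (hA : ∀ i i' j j', j ≠ j' → A (i, j) (i', j') = 0)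
    (hB : ∀ k k' l l', k ≠ k' → B (k, l) (k', l') = 0)
    (a b : (Fin m × Fin n) × Fin u × Fin v) (hab : (a.1.2, a.2.1) ≠ (b.1.2, b.2.1)) :
    (A ⊗ₖ B) a b = 0 := by
  rw [kroneckerMap_apply]
  rcases not_and_or.mp (mt Prod.ext_iff.mpr hab) with h | h
  · rw [hA _ _ _ _ h, zero_mul]
  · rw [hB _ _ _ _ h, mul_zero]

theorem Real.sSup_eq_zero_of_subset_singleton {s : Set ℝ} (hs : s ⊆ {0}) : sSup s = 0 := by
  rcases Set.subset_singleton_iff_eq.mp hs with rfl | rfl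
  · exact Real.sSup_empty
  · exact csSup_singleton 0

theorem stmt8_general {m n u v : ℕ}
    (ρA : Fin n → Matrix (Fin m) (Fin m) ℂ) (hρA : ∀ e, IsDensity (ρA e))
    (ρD : Fin u → Matrix (Fin v) (Fin v) ℂ) (hρD : ∀ f, IsDensity (ρD f))
    (p : Fin n → ℝ) (q : Fin u → ℝ)
    (hdist : ∀ e f e' f', p e * q f = p e' * q f' → (e, f) = (e', f'))
    (ρAB : Matrix (Fin m × Fin n) (Fin m × Fin n) ℂ)
    (ρCD : Matrix (Fin u × Fin v) (Fin u × Fin v) ℂ)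
    (hAB : ρAB = ∑ e, ((p e : ℝ) : ℂ) • (ρA e ⊗ₖ Matrix.single e e (1 : ℂ)))
    (hCD : ρCD = ∑ f, ((q f : ℝ) : ℂ) • (Matrix.single f f (1 : ℂ) ⊗ₖ ρD f)) :
    NHb ρAB ρCD = 0 := by
  set d : Fin n × Fin u → ℂ := fun g => ((p g.1 * q g.2 : ℝ) : ℂ)
  have hσ : redB ρAB ⊗ₖ redC ρCD = diagonal d := by
    rw [hAB, hCD, redB_sum_smul_kronecker_single, redC_sum_smul_single_kronecker,
      diagonal_kronecker_diagonal]
    simp [(hρA _).2, (hρD _).2, d]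
  have hd : Function.Injective d := fun g g' h => hdist _ _ _ _ (Complex.ofReal_injective h)
  have hblock : ∀ a b, (a.1.2, a.2.1) ≠ (b.1.2, b.2.1) → (ρAB ⊗ₖ ρCD) a b = 0 := by
    subst hAB hCD
    exact kronecker_apply_eq_zero_of_mid_ne
      (fun i i' j j' hj => sum_smul_kronecker_single_apply_of_ne _ _ hj i i')
      (fun k k' l l' hk => sum_smul_single_kronecker_apply_of_ne _ _ hk l l')
  refine Real.sSup_eq_zero_of_subset_singleton ?_
  rintro r ⟨w, hw, hfix, rfl⟩
  rw [hσ] at hfix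
  have hcomm (h) : Commute (ampMid m v (projOf w h)) (psdSqrt (ρAB ⊗ₖ ρCD)) :=
    (commute_ampMid_of_isDiag hblock
      (.of_commute_diagonal hd (hw.commute_projOf_of_fixesVNM hfix h))).symm.psdSqrt_left.symm
  simp [pinchBC_eq_self_of_commute hw hcomm, hsNormSq]

/-- For classical-quantum inputs
`ρ_AB = Σ_e p_e (ρ_e^A ⊗ E_e)` and `ρ_CD = Σ_f q_f (E_f ⊗ ρ_f^D)` whose products
`p_e q_f` are pairwise distinct, the nonbilocality vanishes. -/
theorem stmt8 {m n u v : ℕ}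
    (ρA : Fin n → Matrix (Fin m) (Fin m) ℂ) (hρA : ∀ e, IsDensity (ρA e))
    (ρD : Fin u → Matrix (Fin v) (Fin v) ℂ) (hρD : ∀ f, IsDensity (ρD f))
    (p : Fin n → ℝ) (q : Fin u → ℝ)
    (hp : ∀ e, 0 ≤ p e) (hq : ∀ f, 0 ≤ q f)
    (hp1 : ∑ e, p e = 1) (hq1 : ∑ f, q f = 1)
    (hdist : ∀ e f e' f', p e * q f = p e' * q f' → (e, f) = (e', f'))
    (ρAB : Matrix (Fin m × Fin n) (Fin m × Fin n) ℂ)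
    (ρCD : Matrix (Fin u × Fin v) (Fin u × Fin v) ℂ)
    (hAB : ρAB = ∑ e, ((p e : ℝ) : ℂ) • (ρA e ⊗ₖ Matrix.single e e (1 : ℂ)))
    (hCD : ρCD = ∑ f, ((q f : ℝ) : ℂ) • (Matrix.single f f (1 : ℂ) ⊗ₖ ρD f)) :
    NHb ρAB ρCD = 0 :=
  stmt8_general ρA hρA ρD hρD p q hdist ρAB ρCD hAB hCD
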